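/- With the first-order rogue wave construction of the context (λ0 purely imaginary with Im(λ0) > 0, so ζ > 0 and every a_j > 0), the value 1 + (n+1)·√n / (Σ_{j=1}^n 1/sin(ω_j)) is the greatest element of the set of values ‖q^{[1]}_β(x,t)‖₁ / ‖a‖₁, where β ranges over all vectors of ℂ^{n+1} linearly independent from ξ_0 and (x,t) ranges over ℝ²; here ‖q^{[1]}_β(x,t)‖₁ = Σ_{j=1}^n |q_j^{[1]}(x,t)| and ‖a‖₁ = Σ_{j=1}^n a_j. Moreover this greatest value is attained at β = η = (√n, i, i, …, i)ᵀ and (x,t) = (0,0). -/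

import Mathlib

open Complex Matrix Finset

noncomputable section

/-- Index type for `(n+1)×(n+1)` matrices: a `1`-block plus an `n`-block. -/
abbrev Idx (n : ℕ) := Fin 1 ⊕ Fin n

/-- `ζ = 2·Im(λ0)/(n+1)`. -/
def zeta (n : ℕ) (l0 : ℂ) : ℝ := 2 * l0.im / (n + 1)

/-- `ω_j = jπ/(n+1)`. -/
def om (n j : ℕ) : ℝ := j * Real.pi / (n + 1)

/-- `a_j = ζ·csc(ω_j)` for `j = 1,…,n` (indexed by `j : Fin n` as `j+1`). -/
def aa (n : ℕ) (l0 : ℂ) (j : Fin n) : ℝ := zeta n l0 / Real.sin (om n ((j : ℕ) + 1))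

/-- `b_j = ζ·cot(ω_j) − 2·Re(λ0)` for `j = 1,…,n`. -/
def bb (n : ℕ) (l0 : ℂ) (j : Fin n) : ℝ :=
  zeta n l0 * (Real.cos (om n ((j : ℕ) + 1)) / Real.sin (om n ((j : ℕ) + 1))) - 2 * l0.re

/-- `z0 = 2·Re(λ0) + i·ζ`. -/
def zz0 (n : ℕ) (l0 : ℂ) : ℂ := 2 * l0.re + Complex.I * zeta n l0

/-- The `(n+1)×(n+1)` matrix `B` with `(1,1)` entry `i·n·ζ`, first row/column entries `a_j`,
diagonal entries `−(z0 + b_j)` and all other entries `0`. -/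
def Bmat (n : ℕ) (l0 : ℂ) : Matrix (Idx n) (Idx n) ℂ :=
  Matrix.fromBlocks
    (Matrix.of fun _ _ => Complex.I * n * zeta n l0)
    (Matrix.of fun _ j => (aa n l0 j : ℂ))
    (Matrix.of fun i _ => (aa n l0 i : ℂ))
    (Matrix.diagonal fun j => -(zz0 n l0 + (bb n l0 j : ℂ)))

/-- The vector `ξ_0 = (1, a_1/(z0+b_1), …, a_n/(z0+b_n))ᵀ`. -/
def xi0 (n : ℕ) (l0 : ℂ) : Idx n → ℂ :=
  Sum.elim (fun _ => 1)
    (fun k : Fin n => (aa n l0 k : ℂ) / (zz0 n l0 + (bb n l0 k : ℂ)))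

/-- The matrix polynomial
`A(x,t) = Σ_{s=0}^{n} Σ_{k=0}^{⌊n/2⌋} (i^{s+k}/(2^k s! k!)) B^{s+2k} (x+z0 t)^s t^k`. -/
def Amat (n : ℕ) (l0 : ℂ) (x t : ℝ) : Matrix (Idx n) (Idx n) ℂ :=
  ∑ s ∈ Finset.range (n + 1), ∑ k ∈ Finset.range (n / 2 + 1),
    ((Complex.I ^ (s + k) * ((x : ℂ) + zz0 n l0 * (t : ℂ)) ^ s * (t : ℂ) ^ k) /
        ((2 : ℂ) ^ k * (Nat.factorial s : ℂ) * (Nat.factorial k : ℂ))) •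
      (Bmat n l0) ^ (s + 2 * k)

/-- The plane-wave phase `θ_j(x,t) = b_j x − (b_j²/2 − Σ_k a_k²) t`. -/
def theta (n : ℕ) (l0 : ℂ) (j : Fin n) (x t : ℝ) : ℝ :=
  bb n l0 j * x - ((bb n l0 j) ^ 2 / 2 - ∑ k, (aa n l0 k) ^ 2) * t

/-- The plane-wave background `q_j^{bg}(x,t) = a_j e^{iθ_j(x,t)}`. -/
def qbg (n : ℕ) (l0 : ℂ) (j : Fin n) (x t : ℝ) : ℂ :=
  (aa n l0 j : ℂ) * Complex.exp (Complex.I * (theta n l0 j x t : ℝ))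

/-- The vector `w(x,t) = A(x,t)·β`. -/
def wvec (n : ℕ) (l0 : ℂ) (β : Idx n → ℂ) (x t : ℝ) : Idx n → ℂ :=
  (Amat n l0 x t).mulVec β

/-- The first-order rogue wave
`q_j^{[1]} = q_j^{bg}·(1 − 2i(n+1)ζ w_{j+1} conj(w_1)/(a_j ‖w‖²))`. -/
def q1 (n : ℕ) (l0 : ℂ) (β : Idx n → ℂ) (j : Fin n) (x t : ℝ) : ℂ :=
  qbg n l0 j x t *
    (1 - 2 * Complex.I * ((n : ℂ) + 1) * (zeta n l0 : ℝ) *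
        wvec n l0 β x t (Sum.inr j) * (starRingEnd ℂ) (wvec n l0 β x t (Sum.inl 0)) /
      ((aa n l0 j : ℂ) * ((∑ i, Complex.normSq (wvec n l0 β x t i) : ℝ) : ℂ)))

/-- The vector `η = (√n, i, i, …, i)ᵀ`. -/
def etaVec (n : ℕ) : Idx n → ℂ :=
  Sum.elim (fun _ => (Real.sqrt n : ℂ)) (fun _ => Complex.I)

/-!
The triangle inequality gives `|q_j| ≤ a_j + 2(n+1)ζ |w_1| |w_{j+1}| / ‖w‖²`. Summing over `j`,
Cauchy–Schwarz `Σ_j |w_{j+1}| ≤ √n (Σ_j |w_{j+1}|²)^{1/2}` and AM–GM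
`2 |w_1| (Σ_j |w_{j+1}|²)^{1/2} ≤ ‖w‖²` bound `Σ_j |q_j|` by `Σ_j a_j + (n+1)ζ√n`, whatever `β`,
`x` and `t` are. Since `A(0,0) = 1`, at the origin `w = β`, and for `β = η` every inequality is an
equality: all `|w_{j+1}|` are equal, `|w_1|² = Σ_j |w_{j+1}|²`, and each correction term
`-2i(n+1)ζ · i · √n / (2n)` is a positive real, aligned with `a_j`.
-/

lemma Real.two_mul_abs_mul_sum_abs_le {ι : Type*} [Fintype ι] (a : ℝ) (b : ι → ℝ) :
    2 * |a| * ∑ i, |b i| ≤ √(Fintype.card ι) * (a ^ 2 + ∑ i, b i ^ 2) := by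
  set S := ∑ i, b i ^ 2
  have cauchy_schwarz : ∑ i, |b i| ≤ √(Fintype.card ι) * √S := by
    simpa [S] using Real.sum_mul_le_sqrt_mul_sqrt Finset.univ (fun _ => (1 : ℝ)) (|b ·|)
  have am_gm : 2 * |a| * √S ≤ a ^ 2 + S := by
    nlinarith [Real.sq_sqrt (Finset.sum_nonneg fun i _ => sq_nonneg (b i) : 0 ≤ S),
      sq_nonneg (|a| - √S), sq_abs a]
  calc 2 * |a| * ∑ i, |b i| ≤ 2 * |a| * (√(Fintype.card ι) * √S) := by gcongr
    _ = √(Fintype.card ι) * (2 * |a| * √S) := by ring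
    _ ≤ √(Fintype.card ι) * (a ^ 2 + S) := by gcongr

lemma two_mul_norm_mul_sum_norm_le {n : ℕ} (w : Idx n → ℂ) :
    2 * ‖w (Sum.inl 0)‖ * ∑ j, ‖w (Sum.inr j)‖ ≤ √n * ∑ i, Complex.normSq (w i) := by
  simpa [Fintype.sum_sum_type, ← Complex.sq_norm] using
    Real.two_mul_abs_mul_sum_abs_le ‖w (Sum.inl 0)‖ fun j => ‖w (Sum.inr j)‖

lemma Complex.norm_mul_one_sub_div_le {u c : ℂ} {a d : ℝ} (hu : ‖u‖ = a) (ha : 0 < a)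
    (hd : 0 ≤ d) : ‖u * (1 - c / (a * d))‖ ≤ a + ‖c‖ / d := by
  calc ‖u * (1 - c / (a * d))‖ ≤ a * (1 + ‖c‖ / (a * d)) := by
        rw [norm_mul, hu]
        gcongr
        refine (norm_sub_le _ _).trans_eq ?_
        rw [norm_one, norm_div, ← ofReal_mul, norm_real, Real.norm_of_nonneg (by positivity)]
    _ = a + ‖c‖ / d := by
        rw [mul_add, mul_one, mul_div_assoc', mul_div_mul_left _ _ ha.ne']

section RogueWave

variable {n : ℕ} {l0 : ℂ}

lemma sin_om_pos (j : Fin n) : 0 < Real.sin (om n ((j : ℕ) + 1)) := by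
  have hj : ((j : ℕ) + 1 : ℝ) < n + 1 := by exact_mod_cast Nat.succ_lt_succ j.2
  apply Real.sin_pos_of_pos_of_lt_pi
  · unfold om; positivity
  · rw [om, div_lt_iff₀ (by positivity)]
    push_cast
    nlinarith [Real.pi_pos]

lemma zeta_pos (him : 0 < l0.im) : 0 < zeta n l0 := by
  unfold zeta; positivity

lemma aa_pos (him : 0 < l0.im) (j : Fin n) : 0 < aa n l0 j :=
  div_pos (zeta_pos him) (sin_om_pos j)

lemma sum_aa : ∑ j, aa n l0 j = zeta n l0 * ∑ j : Fin n, 1 / Real.sin (om n ((j : ℕ) + 1)) := by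
  simp only [Finset.mul_sum, aa, mul_one_div]

lemma sum_one_div_sin_om_pos (hn : 1 ≤ n) :
    0 < ∑ j : Fin n, 1 / Real.sin (om n ((j : ℕ) + 1)) :=
  haveI : Nonempty (Fin n) := ⟨⟨0, hn⟩⟩
  Finset.sum_pos (fun j _ => one_div_pos.2 (sin_om_pos j)) Finset.univ_nonempty

lemma sum_aa_pos (hn : 1 ≤ n) (him : 0 < l0.im) : 0 < ∑ j, aa n l0 j :=
  haveI : Nonempty (Fin n) := ⟨⟨0, hn⟩⟩
  Finset.sum_pos (fun j _ => aa_pos him j) Finset.univ_nonempty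

lemma norm_qbg (him : 0 < l0.im) (j : Fin n) (x t : ℝ) : ‖qbg n l0 j x t‖ = aa n l0 j := by
  rw [qbg, norm_mul, Complex.norm_exp_I_mul_ofReal, mul_one, Complex.norm_real,
    Real.norm_of_nonneg (aa_pos him j).le]

lemma norm_q1_le (him : 0 < l0.im) (β : Idx n → ℂ) (j : Fin n) (x t : ℝ) :
    ‖q1 n l0 β j x t‖ ≤ aa n l0 j + 2 * (n + 1) * zeta n l0 *
      ‖wvec n l0 β x t (Sum.inl 0)‖ * ‖wvec n l0 β x t (Sum.inr j)‖ /
        ∑ i, Complex.normSq (wvec n l0 β x t i) := by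
  refine (Complex.norm_mul_one_sub_div_le (norm_qbg him j x t) (aa_pos him j)
    (Finset.sum_nonneg fun i _ => Complex.normSq_nonneg _)).trans_eq ?_
  have hcast : ((n : ℂ) + 1) = ((n + 1 : ℝ) : ℂ) := by push_cast; ring
  rw [hcast]
  simp only [norm_mul, Complex.norm_ofNat, Complex.norm_I, Complex.norm_real, Complex.norm_conj,
    Real.norm_of_nonneg (zeta_pos him).le, Real.norm_of_nonneg (by positivity : (0 : ℝ) ≤ n + 1)]
  ring

theorem sum_norm_q1_le (him : 0 < l0.im) (β : Idx n → ℂ) (x t : ℝ) :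
    ∑ j, ‖q1 n l0 β j x t‖ ≤ ∑ j, aa n l0 j + (n + 1) * zeta n l0 * √n := by
  set w := wvec n l0 β x t
  have hN : 0 ≤ ∑ i, Complex.normSq (w i) := Finset.sum_nonneg fun i _ => Complex.normSq_nonneg _
  have hcorr : 2 * (n + 1) * zeta n l0 * ‖w (Sum.inl 0)‖ * (∑ j, ‖w (Sum.inr j)‖) /
      ∑ i, Complex.normSq (w i) ≤ (n + 1) * zeta n l0 * √n := by
    have := zeta_pos (n := n) him
    refine div_le_of_le_mul₀ hN (by positivity) ?_
    calc 2 * (n + 1) * zeta n l0 * ‖w (Sum.inl 0)‖ * ∑ j, ‖w (Sum.inr j)‖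
        = (n + 1) * zeta n l0 * (2 * ‖w (Sum.inl 0)‖ * ∑ j, ‖w (Sum.inr j)‖) := by ring
      _ ≤ (n + 1) * zeta n l0 * (√n * ∑ i, Complex.normSq (w i)) := by
        exact mul_le_mul_of_nonneg_left (two_mul_norm_mul_sum_norm_le w) (by positivity)
      _ = _ := by ring
  calc ∑ j, ‖q1 n l0 β j x t‖
      ≤ ∑ j, (aa n l0 j + 2 * (n + 1) * zeta n l0 * ‖w (Sum.inl 0)‖ * ‖w (Sum.inr j)‖ /
          ∑ i, Complex.normSq (w i)) := Finset.sum_le_sum fun j _ => norm_q1_le him β j x t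
    _ = ∑ j, aa n l0 j + 2 * (n + 1) * zeta n l0 * ‖w (Sum.inl 0)‖ * (∑ j, ‖w (Sum.inr j)‖) /
          ∑ i, Complex.normSq (w i) := by
      rw [Finset.sum_add_distrib, Finset.mul_sum, Finset.sum_div]
    _ ≤ _ := by gcongr

lemma Amat_zero_zero : Amat n l0 0 0 = 1 := by
  rw [Amat, Finset.sum_eq_single 0, Finset.sum_eq_single 0]
  · simp
  · intro k _ hk; simp [zero_pow hk]
  · simp
  · intro s _ hs; exact Finset.sum_eq_zero fun k _ => by simp [zero_pow hs]
  · simp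

lemma wvec_zero_zero (β : Idx n → ℂ) : wvec n l0 β 0 0 = β := by
  rw [wvec, Amat_zero_zero, one_mulVec]

lemma q1_etaVec_zero_zero (hn : 1 ≤ n) (him : 0 < l0.im) (j : Fin n) :
    q1 n l0 (etaVec n) j 0 0 = ((aa n l0 j + (n + 1) * zeta n l0 * √n / n : ℝ) : ℂ) := by
  have haC : (aa n l0 j : ℂ) ≠ 0 := Complex.ofReal_ne_zero.2 (aa_pos him j).ne'
  have hnC : (n : ℂ) ≠ 0 := Nat.cast_ne_zero.2 (by omega)
  have hnormSq : ∑ i, Complex.normSq (etaVec n i) = 2 * n := by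
    simp [Fintype.sum_sum_type, etaVec, Real.mul_self_sqrt (Nat.cast_nonneg n)]
    ring
  simp only [q1, qbg, theta, mul_zero, sub_zero, Complex.ofReal_zero, Complex.exp_zero, mul_one,
    wvec_zero_zero, hnormSq]
  simp only [etaVec, Sum.elim_inl, Sum.elim_inr, Complex.conj_ofReal]
  push_cast
  field_simp
  rw [Complex.I_sq]
  ring

lemma sum_norm_q1_etaVec_zero_zero (hn : 1 ≤ n) (him : 0 < l0.im) :
    ∑ j, ‖q1 n l0 (etaVec n) j 0 0‖ = ∑ j, aa n l0 j + (n + 1) * zeta n l0 * √n := by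
  have := zeta_pos (n := n) him
  simp only [q1_etaVec_zero_zero hn him, Complex.norm_real,
    fun j => Real.norm_of_nonneg (add_nonneg (aa_pos him j).le (by positivity) :
      0 ≤ aa n l0 j + (n + 1) * zeta n l0 * √n / n),
    Finset.sum_add_distrib, Finset.sum_const, Finset.card_univ, Fintype.card_fin, nsmul_eq_mul]
  field_simp

lemma linearIndependent_etaVec_xi0 (hn : 1 ≤ n) (him : 0 < l0.im) :
    LinearIndependent ℂ ![etaVec n, xi0 n l0] := by
  have hz := zeta_pos (n := n) him
  let j : Fin n := ⟨0, hn⟩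
  have hpole_im : (zz0 n l0 + (bb n l0 j : ℂ)).im = zeta n l0 := by simp [zz0]
  have hpole : zz0 n l0 + (bb n l0 j : ℂ) ≠ 0 := fun h => hz.ne (by simpa [h] using hpole_im)
  refine linearIndependent_fin2.2 ⟨fun h => one_ne_zero (congrFun h (Sum.inl 0)), fun c hc => ?_⟩
  have h0 := congrFun hc (Sum.inl 0)
  have h1 := congrFun hc (Sum.inr j)
  simp only [Matrix.cons_val_zero, Matrix.cons_val_one, Pi.smul_apply, smul_eq_mul, xi0, etaVec,
    Sum.elim_inl, Sum.elim_inr, mul_one] at h0 h1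
  -- `I (z0 + b_j) = √n a_j` is impossible: the left side has real part `-ζ < 0`.
  have hreal : I * (zz0 n l0 + (bb n l0 j : ℂ)) = ((√n * aa n l0 j : ℝ) : ℂ) := by
    rw [h0] at h1
    push_cast
    field_simp at h1
    linear_combination -h1
  have hre := congrArg Complex.re hreal
  simp only [Complex.mul_re, Complex.I_re, Complex.I_im, hpole_im, Complex.ofReal_re] at hre
  nlinarith [mul_nonneg (Real.sqrt_nonneg n) (aa_pos him j).le]

lemma add_div_sum_aa (hn : 1 ≤ n) (him : 0 < l0.im) :
    (∑ j, aa n l0 j + (n + 1) * zeta n l0 * √n) / ∑ j, aa n l0 j =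
      1 + ((n : ℝ) + 1) * Real.sqrt n / ∑ j : Fin n, 1 / Real.sin (om n ((j : ℕ) + 1)) := by
  have := zeta_pos (n := n) him
  have := sum_one_div_sin_om_pos hn
  rw [sum_aa]
  field_simp

end RogueWave

theorem stmt18_general (n : ℕ) (hn : 1 ≤ n) (l0 : ℂ) (him : 0 < l0.im) :
    IsGreatest
      {r : ℝ | ∃ (β : Idx n → ℂ) (x t : ℝ),
        LinearIndependent ℂ ![β, xi0 n l0] ∧
        r = (∑ j, ‖q1 n l0 β j x t‖) / ∑ j, aa n l0 j}
      (1 + ((n : ℝ) + 1) * Real.sqrt n / ∑ j : Fin n, 1 / Real.sin (om n ((j : ℕ) + 1))) ∧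
    LinearIndependent ℂ ![etaVec n, xi0 n l0] ∧
    (∑ j, ‖q1 n l0 (etaVec n) j 0 0‖) / (∑ j, aa n l0 j) =
      1 + ((n : ℝ) + 1) * Real.sqrt n / ∑ j : Fin n, 1 / Real.sin (om n ((j : ℕ) + 1)) := by
  have hli := linearIndependent_etaVec_xi0 hn him
  have hattained : (∑ j, ‖q1 n l0 (etaVec n) j 0 0‖) / (∑ j, aa n l0 j) =
      1 + ((n : ℝ) + 1) * Real.sqrt n / ∑ j : Fin n, 1 / Real.sin (om n ((j : ℕ) + 1)) := by
    rw [sum_norm_q1_etaVec_zero_zero hn him, add_div_sum_aa hn him]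
  refine ⟨⟨⟨etaVec n, 0, 0, hli, hattained.symm⟩, ?_⟩, hli, hattained⟩
  rintro r ⟨β, x, t, -, rfl⟩
  rw [← add_div_sum_aa hn him]
  exact div_le_div_of_nonneg_right (sum_norm_q1_le him β x t) (sum_aa_pos hn him).le

/-- `1 + (n+1)√n/(Σ_j csc ω_j)` is the greatest value of
`‖q^{[1]}_β(x,t)‖₁/‖a‖₁` over all admissible `β` and `(x,t) ∈ ℝ²`, and it is attained
at `β = η = (√n, i, …, i)ᵀ` and `(x,t) = (0,0)`. -/
theorem stmt18 (n : ℕ) (hn : 1 ≤ n) (l0 : ℂ) (hre : l0.re = 0) (him : 0 < l0.im) :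
    IsGreatest
      {r : ℝ | ∃ (β : Idx n → ℂ) (x t : ℝ),
        LinearIndependent ℂ ![β, xi0 n l0] ∧
        r = (∑ j, ‖q1 n l0 β j x t‖) / ∑ j, aa n l0 j}
      (1 + ((n : ℝ) + 1) * Real.sqrt n / ∑ j : Fin n, 1 / Real.sin (om n ((j : ℕ) + 1))) ∧
    LinearIndependent ℂ ![etaVec n, xi0 n l0] ∧
    (∑ j, ‖q1 n l0 (etaVec n) j 0 0‖) / (∑ j, aa n l0 j) =
      1 + ((n : ℝ) + 1) * Real.sqrt n / ∑ j : Fin n, 1 / Real.sin (om n ((j : ℕ) + 1)) :=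
  stmt18_general n hn l0 him

end
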